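/- Let X_s ∈ ℝ^{n_s×d} and y_s ∈ ℝ^{n_s} for s = 1,…,T, and let Λ_0, Λ_1, …, Λ_T ∈ ℝ^{d×d} be symmetric positive definite. Define A_t = Λ_t + Σ_{s=1}^t X_sᵀX_s, b_t = Σ_{s=1}^t X_sᵀy_s (b_0 = 0), A_0 = Λ_0, the iterates θ_t = A_t^{-1} b_{t-1} and θ̃_t = A_{t-1}^{-1} b_{t-1}, and the functions L̃_t(θ) = θᵀΛ_tθ + Σ_{s=1}^t ‖X_sθ − y_s‖₂². Then for every t ∈ [T]: ‖X_tθ_t − y_t‖₂² + L̃_{t-1}(θ̃_t) − L̃_t(θ̃_{t+1}) = (θ̃_{t+1} − θ_t)ᵀ A_t (θ̃_{t+1} − θ_t) − (θ̃_t − θ_t)ᵀ A_{t-1} (θ̃_t − θ_t) − θ_tᵀ(Λ_t − Λ_{t-1})θ_t. -/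

import Mathlib

/-!
Write `L̃_t(θ) = θᵀA_tθ − 2b_tᵀθ + ∑_{s ≤ t} ‖y_s‖²`. Since `A_t` is symmetric and
`A_t θ̃_{t+1} = b_t`, completing the square gives
`L̃_t(θ) − L̃_t(θ̃_{t+1}) = (θ − θ̃_{t+1})ᵀA_t(θ − θ̃_{t+1})` for every `θ`, and likewise
`L̃_{t−1}(θ) − L̃_{t−1}(θ̃_t) = (θ − θ̃_t)ᵀA_{t−1}(θ − θ̃_t)`. Taking `θ = θ_t` in both and using
`L̃_t(θ_t) = L̃_{t−1}(θ_t) + θ_tᵀ(Λ_t − Λ_{t−1})θ_t + ‖X_tθ_t − y_t‖²` yields the identity.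
-/

open Matrix Finset

section CompletingTheSquare

variable {R m : Type*} [CommRing R] [Fintype m]

theorem quadratic_sub_quadratic_of_mulVec_eq {A : Matrix m m R} {b u : m → R}
    (hA : A.IsSymm) (hu : A *ᵥ u = b) (z : m → R) :
    (z ⬝ᵥ A *ᵥ z - 2 * (b ⬝ᵥ z)) - (u ⬝ᵥ A *ᵥ u - 2 * (b ⬝ᵥ u))
      = (z - u) ⬝ᵥ A *ᵥ (z - u) := by
  have hsymm : u ⬝ᵥ A *ᵥ z = z ⬝ᵥ A *ᵥ u := by
    rw [← dotProduct_transpose_mulVec, hA.eq]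
  rw [mulVec_sub, sub_dotProduct, dotProduct_sub, dotProduct_sub, hsymm, hu, dotProduct_comm b z,
    dotProduct_comm b u]
  ring

end CompletingTheSquare

section RidgeLoss

variable {R ι m : Type*} {κ : ι → Type*} [CommRing R] [Fintype m] [∀ i, Fintype (κ i)]

def ridgeLoss (Λ : Matrix m m R) (s : Finset ι) (X : ∀ i, Matrix (κ i) m R) (y : ∀ i, κ i → R)
    (v : m → R) : R :=
  v ⬝ᵥ Λ *ᵥ v + ∑ i ∈ s, ∑ j, (X i *ᵥ v - y i) j ^ 2

theorem sum_sq_mulVec_sub {n : Type*} [Fintype n] (X : Matrix n m R) (y : n → R) (v : m → R) :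
    ∑ j, (X *ᵥ v - y) j ^ 2 = v ⬝ᵥ (Xᵀ * X) *ᵥ v - 2 * (Xᵀ *ᵥ y ⬝ᵥ v) + y ⬝ᵥ y := by
  have hsq : ∑ j, (X *ᵥ v - y) j ^ 2 = (X *ᵥ v - y) ⬝ᵥ (X *ᵥ v - y) := by
    simp only [dotProduct, sq]
  have hgram : v ⬝ᵥ (Xᵀ * X) *ᵥ v = X *ᵥ v ⬝ᵥ X *ᵥ v := by
    rw [← mulVec_mulVec, dotProduct_transpose_mulVec]
  have hcross : Xᵀ *ᵥ y ⬝ᵥ v = y ⬝ᵥ X *ᵥ v := by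
    rw [dotProduct_comm, dotProduct_transpose_mulVec, dotProduct_comm]
  rw [hsq, hgram, hcross, sub_dotProduct, dotProduct_sub, dotProduct_sub,
    dotProduct_comm (X *ᵥ v) y]
  ring

theorem ridgeLoss_eq (Λ : Matrix m m R) (s : Finset ι) (X : ∀ i, Matrix (κ i) m R)
    (y : ∀ i, κ i → R) (v : m → R) :
    ridgeLoss Λ s X y v = v ⬝ᵥ (Λ + ∑ i ∈ s, (X i)ᵀ * X i) *ᵥ v
      - 2 * ((∑ i ∈ s, (X i)ᵀ *ᵥ y i) ⬝ᵥ v) + ∑ i ∈ s, y i ⬝ᵥ y i := by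
  simp only [ridgeLoss, sum_sq_mulVec_sub, add_mulVec, sum_mulVec, dotProduct_add, dotProduct_sum,
    sum_dotProduct, sum_add_distrib, sum_sub_distrib, mul_sum]
  ring

theorem ridgeLoss_insert [DecidableEq ι] {i : ι} {s : Finset ι} (hi : i ∉ s)
    (Λ Λ' : Matrix m m R) (X : ∀ i, Matrix (κ i) m R) (y : ∀ i, κ i → R) (v : m → R) :
    ridgeLoss Λ' (insert i s) X y v
      = ridgeLoss Λ s X y v + v ⬝ᵥ (Λ' - Λ) *ᵥ v + ∑ j, (X i *ᵥ v - y i) j ^ 2 := by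
  rw [ridgeLoss, ridgeLoss, sum_insert hi, sub_mulVec, dotProduct_sub]
  ring

theorem ridgeLoss_sub_ridgeLoss_of_mulVec_eq {Λ : Matrix m m R} {s : Finset ι}
    {X : ∀ i, Matrix (κ i) m R} {y : ∀ i, κ i → R} {u : m → R}
    (hA : (Λ + ∑ i ∈ s, (X i)ᵀ * X i).IsSymm)
    (hu : (Λ + ∑ i ∈ s, (X i)ᵀ * X i) *ᵥ u = ∑ i ∈ s, (X i)ᵀ *ᵥ y i) (z : m → R) :
    ridgeLoss Λ s X y z - ridgeLoss Λ s X y u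
      = (z - u) ⬝ᵥ (Λ + ∑ i ∈ s, (X i)ᵀ * X i) *ᵥ (z - u) := by
  rw [ridgeLoss_eq, ridgeLoss_eq, ← quadratic_sub_quadratic_of_mulVec_eq hA hu]
  ring

end RidgeLoss

theorem Matrix.PosDef.add_sum_transpose_mul_self {m ι : Type*} {κ : ι → Type*} [Fintype m]
    [∀ i, Fintype (κ i)] {Λ : Matrix m m ℝ} (hΛ : Λ.PosDef) (s : Finset ι)
    (X : ∀ i, Matrix (κ i) m ℝ) : (Λ + ∑ i ∈ s, (X i)ᵀ * X i).PosDef :=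
  hΛ.add_posSemidef <| posSemidef_sum s fun i _ => by
    simpa using posSemidef_conjTranspose_mul_self (X i)

theorem Matrix.PosDef.mulVec_inv_mulVec {K m : Type*} [Field K] [PartialOrder K] [StarRing K]
    [Fintype m] [DecidableEq m] {M : Matrix m m K} (hM : M.PosDef) (x : m → K) : M *ᵥ (M⁻¹ *ᵥ x) = x := by
  rw [mulVec_mulVec, mul_nonsing_inv _ ((isUnit_iff_isUnit_det M).mp hM.isUnit), one_mulVec]

theorem multivaw_per_step_identity_general
    (T d : ℕ) (n : ℕ → ℕ)
    (X : (s : ℕ) → Matrix (Fin (n s)) (Fin d) ℝ)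
    (y : (s : ℕ) → Fin (n s) → ℝ)
    (Λ : ℕ → Matrix (Fin d) (Fin d) ℝ)
    (hΛ : ∀ t ≤ T, (Λ t).PosDef)
    (A : ℕ → Matrix (Fin d) (Fin d) ℝ)
    (hA : ∀ t ≤ T, A t = Λ t + ∑ s ∈ Icc 1 t, (X s)ᵀ * X s)
    (b : ℕ → (Fin d → ℝ))
    (hb : ∀ t ≤ T, b t = ∑ s ∈ Icc 1 t, (X s)ᵀ.mulVec (y s))
    (θ θt : ℕ → (Fin d → ℝ))
    (hθt : ∀ t, 1 ≤ t → t ≤ T + 1 → θt t = (A (t - 1))⁻¹.mulVec (b (t - 1)))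
    (L : ℕ → (Fin d → ℝ) → ℝ)
    (hL : ∀ t ≤ T, ∀ v : Fin d → ℝ,
      L t v = v ⬝ᵥ (Λ t).mulVec v + ∑ s ∈ Icc 1 t, ∑ i, ((X s).mulVec v - y s) i ^ 2)
    (t : ℕ) (ht : t ∈ Icc 1 T) :
    (∑ i, ((X t).mulVec (θ t) - y t) i ^ 2) + L (t - 1) (θt t) - L t (θt (t + 1))
      = (θt (t + 1) - θ t) ⬝ᵥ (A t).mulVec (θt (t + 1) - θ t)
        - (θt t - θ t) ⬝ᵥ (A (t - 1)).mulVec (θt t - θ t)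
        - θ t ⬝ᵥ (Λ t - Λ (t - 1)).mulVec (θ t) := by
  obtain ⟨k, rfl⟩ : ∃ k, t = k + 1 := ⟨t - 1, by grind⟩
  have hkT : k + 1 ≤ T := (mem_Icc.mp ht).2
  have hApd : ∀ j ≤ T, (A j).PosDef := fun j hj =>
    hA j hj ▸ (hΛ j hj).add_sum_transpose_mul_self _ X
  have hLridge : ∀ j ≤ T, L j = ridgeLoss (Λ j) (Icc 1 j) X y := fun j hj => funext (hL j hj)
  have hexcess : ∀ j ≤ T, ∀ u z, A j *ᵥ u = b j → L j z - L j u = (u - z) ⬝ᵥ A j *ᵥ (u - z) := by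
    intro j hj u z hu
    have hsymm : (A j).IsSymm := isHermitian_iff_isSymm.mp (hApd j hj).isHermitian
    rw [hA j hj] at hu hsymm
    rw [hb j hj] at hu
    rw [hLridge j hj, ridgeLoss_sub_ridgeLoss_of_mulVec_eq hsymm hu, ← hA j hj, ← neg_sub u z,
      mulVec_neg, dotProduct_neg, neg_dotProduct, neg_neg]
  have hu : A k *ᵥ θt (k + 1) = b k := by
    simpa [hθt (k + 1) le_add_self (by omega)] using (hApd k (by omega)).mulVec_inv_mulVec (b k)
  have hv : A (k + 1) *ᵥ θt (k + 2) = b (k + 1) := by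
    simpa [hθt (k + 2) (by omega) (by omega)] using (hApd (k + 1) hkT).mulVec_inv_mulVec _
  have hstep : L (k + 1) (θ (k + 1)) = L k (θ (k + 1)) + θ (k + 1) ⬝ᵥ (Λ (k + 1) - Λ k) *ᵥ θ (k + 1)
      + ∑ i, (X (k + 1) *ᵥ θ (k + 1) - y (k + 1)) i ^ 2 := by
    rw [hLridge _ hkT, hLridge _ (by omega), ← insert_Icc_right_eq_Icc_add_one (by omega)]
    exact ridgeLoss_insert (by simp) _ _ _ _ _
  rw [Nat.add_sub_cancel, ← hexcess _ hkT _ _ hv, ← hexcess _ (by omega) _ _ hu, hstep]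
  ring

/-- **Key algebraic identity in the MultiVAW analysis.**  With
`A_t = Λ_t + ∑_{s=1}^t XₛᵀXₛ` (`A_0 = Λ_0`), `b_t = ∑_{s=1}^t Xₛᵀyₛ` (`b_0 = 0`),
iterates `θ_t = A_t⁻¹ b_{t-1}`, `θ̃_t = A_{t-1}⁻¹ b_{t-1}`, and
`L̃_t(θ) = θᵀΛ_tθ + ∑_{s=1}^t ‖Xₛθ − yₛ‖₂²`, for every `t ∈ [T]`:
`‖X_tθ_t − y_t‖₂² + L̃_{t-1}(θ̃_t) − L̃_t(θ̃_{t+1})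
  = (θ̃_{t+1} − θ_t)ᵀ A_t (θ̃_{t+1} − θ_t) − (θ̃_t − θ_t)ᵀ A_{t-1} (θ̃_t − θ_t)
    − θ_tᵀ(Λ_t − Λ_{t-1})θ_t`. -/
theorem multivaw_per_step_identity
    (T d : ℕ) (n : ℕ → ℕ)
    (X : (s : ℕ) → Matrix (Fin (n s)) (Fin d) ℝ)
    (y : (s : ℕ) → Fin (n s) → ℝ)
    (Λ : ℕ → Matrix (Fin d) (Fin d) ℝ)
    (hΛ : ∀ t ≤ T, (Λ t).PosDef)
    (A : ℕ → Matrix (Fin d) (Fin d) ℝ)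
    (hA : ∀ t ≤ T, A t = Λ t + ∑ s ∈ Icc 1 t, (X s)ᵀ * X s)
    (b : ℕ → (Fin d → ℝ))
    (hb : ∀ t ≤ T, b t = ∑ s ∈ Icc 1 t, (X s)ᵀ.mulVec (y s))
    (θ θt : ℕ → (Fin d → ℝ))
    (hθ : ∀ t, 1 ≤ t → t ≤ T → θ t = (A t)⁻¹.mulVec (b (t - 1)))
    (hθt : ∀ t, 1 ≤ t → t ≤ T + 1 → θt t = (A (t - 1))⁻¹.mulVec (b (t - 1)))
    (L : ℕ → (Fin d → ℝ) → ℝ)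
    (hL : ∀ t ≤ T, ∀ v : Fin d → ℝ,
      L t v = v ⬝ᵥ (Λ t).mulVec v + ∑ s ∈ Icc 1 t, ∑ i, ((X s).mulVec v - y s) i ^ 2)
    (t : ℕ) (ht : t ∈ Icc 1 T) :
    (∑ i, ((X t).mulVec (θ t) - y t) i ^ 2) + L (t - 1) (θt t) - L t (θt (t + 1))
      = (θt (t + 1) - θ t) ⬝ᵥ (A t).mulVec (θt (t + 1) - θ t)
        - (θt t - θ t) ⬝ᵥ (A (t - 1)).mulVec (θt t - θ t)
        - θ t ⬝ᵥ (Λ t - Λ (t - 1)).mulVec (θ t) :=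
  multivaw_per_step_identity_general T d n X y Λ hΛ A hA b hb θ θt hθt L hL t ht
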